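/- Let T ⊂ {(r,z) ∈ ℝ² : r ≥ 0} be a triangle and E = [N_i, N_j] an edge with N_j on the axis {r = 0} and N_i off the axis. Then the modified Raviart–Thomas function ψ_E^R := 2 curl(λ_j) λ_i vanishes at every point of the intersection of the closure of T with the axis: ψ_E^R(0,z) = 0 for all (0,z) in the closure of T. In particular, for a type 2 triangle whose edge F lies on the axis, ψ_E^R ≡ 0 on F, so every function in the span of the modified basis functions vanishes pointwise on the rotation axis. -/
import Mathlib


noncomputable section

/-- The two-dimensional `curl` of a scalar function: `curl f = (∂_z f, −∂_r f)`. -/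
def curl2 (f : ℝ × ℝ → ℝ) (p : ℝ × ℝ) : ℝ × ℝ :=
  (fderiv ℝ f p (0, 1), -(fderiv ℝ f p (1, 0)))

/-- The modified Raviart–Thomas function `ψ_E^R = 2 curl(λ_j) λ_i` for an edge
`E = [N_i, N_j]` with `N_j` on the rotation axis. -/
def psiR (li lj : (ℝ × ℝ) →ᵃ[ℝ] ℝ) (p : ℝ × ℝ) : ℝ × ℝ :=
  (2 * li p) • curl2 (fun q => lj q) p

/-- For a triangle `T ⊆ {r ≥ 0}` and an edge `E = [N_i, N_j]` with `N_j` on the axis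
`{r = 0}` and `N_i` off the axis, the modified Raviart–Thomas function `ψ_E^R` vanishes at
every point of `T ∩ {r = 0}`. In particular, for a type 2 triangle whose edge `[N_j, N_k]`
lies on the axis, `ψ_E^R` vanishes identically on that edge. -/
theorem modified_RT_vanishes_on_axis
    (Ni Nj Nk : ℝ × ℝ) (hind : AffineIndependent ℝ ![Ni, Nj, Nk])
    (li lj : (ℝ × ℝ) →ᵃ[ℝ] ℝ)
    (hii : li Ni = 1) (hij : li Nj = 0) (hik : li Nk = 0)
    (hji : lj Ni = 0) (hjj : lj Nj = 1) (hjk : lj Nk = 0)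
    (hT : convexHull ℝ {Ni, Nj, Nk} ⊆ {p : ℝ × ℝ | 0 ≤ p.1})
    (haxj : Nj.1 = 0) (haxi : Ni.1 ≠ 0) :
    (∀ p ∈ convexHull ℝ {Ni, Nj, Nk}, p.1 = 0 → psiR li lj p = (0, 0))
    ∧ (Nk.1 = 0 → ∀ p ∈ segment ℝ Nj Nk, psiR li lj p = (0, 0)) := by
  have hNiT : Ni ∈ convexHull ℝ ({Ni, Nj, Nk} : Set (ℝ × ℝ)) :=
    subset_convexHull ℝ _ (by simp)
  have hNkT : Nk ∈ convexHull ℝ ({Ni, Nj, Nk} : Set (ℝ × ℝ)) :=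
    subset_convexHull ℝ _ (by simp)
  have hNi1 : 0 < Ni.1 := lt_of_le_of_ne (hT hNiT) (Ne.symm haxi)
  have hNk1 : 0 ≤ Nk.1 := hT hNkT
  -- affine map h p = Ni.1 * li p - p.1
  set h : (ℝ × ℝ) →ᵃ[ℝ] ℝ := Ni.1 • li - (LinearMap.fst ℝ ℝ ℝ).toAffineMap with hh
  have hval : ∀ p : ℝ × ℝ, h p = Ni.1 * li p - p.1 := by
    intro p; simp [hh]
  -- li ≥ 0 on the hull
  have h1 : convexHull ℝ ({Ni, Nj, Nk} : Set (ℝ × ℝ)) ⊆ li ⁻¹' Set.Ici 0 := by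
    apply convexHull_min
    · intro q hq
      rcases hq with rfl | rfl | rfl <;> simp [hii, hij, hik]
    · exact (convex_Ici (0:ℝ)).affine_preimage li
  -- h ≤ 0 on the hull
  have h2 : convexHull ℝ ({Ni, Nj, Nk} : Set (ℝ × ℝ)) ⊆ h ⁻¹' Set.Iic 0 := by
    apply convexHull_min
    · intro q hq
      rcases hq with rfl | rfl | rfl <;>
        simp only [Set.mem_preimage, Set.mem_Iic, hval] <;>
        [skip; skip; skip] <;>
        first
          | (rw [hii]; linarith)
          | (rw [hij, haxj]; ring_nf; simp)
          | (rw [hik]; linarith)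
    · exact (convex_Iic (0:ℝ)).affine_preimage h
  have key : ∀ p ∈ convexHull ℝ ({Ni, Nj, Nk} : Set (ℝ × ℝ)), p.1 = 0 → li p = 0 := by
    intro p hp hp1
    have hge : 0 ≤ li p := h1 hp
    have hle : Ni.1 * li p - p.1 ≤ 0 := by have := h2 hp; rwa [Set.mem_preimage, Set.mem_Iic, hval] at this
    nlinarith
  have main : ∀ p ∈ convexHull ℝ ({Ni, Nj, Nk} : Set (ℝ × ℝ)), p.1 = 0 → psiR li lj p = (0, 0) := by
    intro p hp hp1
    have : li p = 0 := key p hp hp1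
    simp [psiR, this, Prod.ext_iff]
  refine ⟨main, fun hNk0 p hp => ?_⟩
  have hsub : segment ℝ Nj Nk ⊆ convexHull ℝ ({Ni, Nj, Nk} : Set (ℝ × ℝ)) := by
    rw [← convexHull_pair]
    exact convexHull_mono (by intro q hq; rcases hq with rfl | rfl <;> simp)
  rcases hp with ⟨a, b, ha, hb, hab, rfl⟩
  have hp1 : (a • Nj + b • Nk).1 = 0 := by
    simp [Prod.fst_add, haxj, hNk0]
  exact main _ (hsub ⟨a, b, ha, hb, hab, rfl⟩) hp1
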